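/- arXiv:2009.14745 — 2 statements merged into one kernel-verified Lean document; each statement's English description precedes it below -/
import Mathlib

section
/- Let (𝒯, d) be a metric space that is isometrically embeddable into (ℝⁿ, ℓ¹), i.e., there is a map i : 𝒯 → ℝⁿ with d(s₁,s₂) = ‖i(s₁) − i(s₂)‖₁ for all s₁,s₂ ∈ 𝒯. Suppose f : [0,∞) → ℝ is such that (x,y) ↦ f(‖x−y‖₁) is positive definite on ℝ^{n+1}. Then for any α, β > 0, the function C((s₁,t₁),(s₂,t₂)) = f(d(s₁,s₂)/α + |t₁−t₂|/β) is positive definite on 𝒯 × ℝ. -/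
/-! The map `(s, t) ↦ (t / β, i s / α)` carries `d(s₁, s₂) / α + |t₁ - t₂| / β` to the `ℓ¹` distance
in `ℝ^{n+1}`, so `C` is the pullback of the positive definite kernel `f (‖x - y‖₁)` along it. -/

open Real Set Finset

lemma abs_div_sub_div_of_nonneg {c : ℝ} (hc : 0 ≤ c) (x y : ℝ) : |x / c - y / c| = |x - y| / c := by
  rw [div_sub_div_same, abs_div, abs_of_nonneg hc]

lemma sum_abs_cons_sub_cons {n : ℕ} (a b : ℝ) (u v : Fin n → ℝ) :
    ∑ m, |(Fin.cons a u : Fin (n + 1) → ℝ) m - (Fin.cons b v : Fin (n + 1) → ℝ) m|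
      = |a - b| + ∑ m, |u m - v m| := by
  simp only [Fin.sum_univ_succ, Fin.cons_zero, Fin.cons_succ]

noncomputable def scaledEmbedding {T : Type*} {n : ℕ} (i : T → Fin n → ℝ) (α β : ℝ)
    (p : T × ℝ) : Fin (n + 1) → ℝ :=
  Fin.cons (p.2 / β) fun m => i p.1 m / α

lemma sum_abs_scaledEmbedding_sub {T : Type*} [PseudoMetricSpace T] {n : ℕ} {i : T → Fin n → ℝ}
    (hi : ∀ s₁ s₂ : T, dist s₁ s₂ = ∑ k, |i s₁ k - i s₂ k|) {α β : ℝ} (hα : 0 ≤ α) (hβ : 0 ≤ β)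
    (p q : T × ℝ) :
    ∑ m, |scaledEmbedding i α β p m - scaledEmbedding i α β q m|
      = dist p.1 q.1 / α + |p.2 - q.2| / β := by
  simp only [scaledEmbedding, sum_abs_cons_sub_cons]
  rw [abs_div_sub_div_of_nonneg hβ, hi, Finset.sum_div]
  simp only [abs_div_sub_div_of_nonneg hα]
  ring

theorem stmt_6 {T : Type*} [MetricSpace T] (n : ℕ) (i : T → (Fin n → ℝ))
    (hi : ∀ s₁ s₂ : T, dist s₁ s₂ = ∑ k, |i s₁ k - i s₂ k|)
    (f : ℝ → ℝ)
    (hf : ∀ (N : ℕ) (a : Fin N → ℝ) (x : Fin N → (Fin (n + 1) → ℝ)),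
      0 ≤ ∑ k, ∑ l, a k * a l * f (∑ m, |x k m - x l m|))
    (α β : ℝ) (hα : 0 < α) (hβ : 0 < β) :
    ∀ (N : ℕ) (a : Fin N → ℝ) (p : Fin N → T × ℝ),
      0 ≤ ∑ k, ∑ l, a k * a l *
        f (dist (p k).1 (p l).1 / α + |(p k).2 - (p l).2| / β) := by
  intro N a p
  simpa only [Function.comp_apply, sum_abs_scaledEmbedding_sub hi hα.le hβ.le] using
    hf N a (scaledEmbedding i α β ∘ p)
end

section
/- Let g(x) = θ₁·exp(−x/θ₂) for x ≥ 0 with θ₁, θ₂ > 0. Then for all a, b ≥ 0 with d = a + b: ∫_{−∞}^{−d} g(−x)·g(−x − d) dx = ∫_{−∞}^{−b} g(−x)·g(−x − (b−a)) dx = (θ₁²θ₂/2)·exp(−d/θ₂). In particular the tail-down covariance with exponential kernel depends on the total stream distance d alone. -/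
/-! The product `g(-x) g(-x - e)` of two shifted exponential kernels is again an exponential
`θ₁² e^{e/θ₂} e^{2x/θ₂}`, whose integral over `(-∞, c)` is `θ₁² θ₂/2 · e^{(2c + e)/θ₂}`.
In the flow-connected case `(c, e) = (-d, d)` and in the flow-unconnected case
`(c, e) = (-b, b - a)`, so in both the exponent is `2c + e = -(a + b) = -d`. -/

open Real Set MeasureTheory

theorem integral_Iio_exp_kernel_mul_shift {θ₁ θ₂ : ℝ} (hθ₂ : 0 < θ₂) {g : ℝ → ℝ}
    (hg : ∀ x, g x = θ₁ * exp (-x / θ₂)) (c e : ℝ) :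
    ∫ x in Iio c, g (-x) * g (-x - e) = θ₁ ^ 2 * θ₂ / 2 * exp ((2 * c + e) / θ₂) := by
  have hprod : ∀ x, g (-x) * g (-x - e) = θ₁ ^ 2 * exp (e / θ₂) * exp (2 / θ₂ * x) := by
    intro x
    rw [hg, hg, mul_assoc (θ₁ ^ 2), ← exp_add, mul_mul_mul_comm, ← exp_add, sq]
    congr 2
    field_simp
    ring
  simp_rw [hprod]
  rw [integral_const_mul, ← integral_Iic_eq_integral_Iio, integral_exp_mul_Iic (by positivity),
    show (2 * c + e) / θ₂ = e / θ₂ + 2 / θ₂ * c by field_simp; ring, exp_add]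
  field_simp

theorem stmt_12_general (θ₁ θ₂ : ℝ) (h2 : 0 < θ₂)
    (g : ℝ → ℝ) (hg : ∀ x : ℝ, g x = θ₁ * Real.exp (-x / θ₂))
    (a b d : ℝ) (hd : d = a + b) :
    (∫ x in Iio (-d), g (-x) * g (-x - d))
        = θ₁ ^ 2 * θ₂ / 2 * Real.exp (-d / θ₂) ∧
    (∫ x in Iio (-b), g (-x) * g (-x - (b - a)))
        = θ₁ ^ 2 * θ₂ / 2 * Real.exp (-d / θ₂) := by
  rw [integral_Iio_exp_kernel_mul_shift h2 hg, integral_Iio_exp_kernel_mul_shift h2 hg]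
  constructor <;> congr 3 <;> linarith

theorem stmt_12 (θ₁ θ₂ : ℝ) (h1 : 0 < θ₁) (h2 : 0 < θ₂)
    (g : ℝ → ℝ) (hg : ∀ x : ℝ, g x = θ₁ * Real.exp (-x / θ₂))
    (a b d : ℝ) (ha : 0 ≤ a) (hb : 0 ≤ b) (hd : d = a + b) :
    (∫ x in Iio (-d), g (-x) * g (-x - d))
        = θ₁ ^ 2 * θ₂ / 2 * Real.exp (-d / θ₂) ∧
    (∫ x in Iio (-b), g (-x) * g (-x - (b - a)))
        = θ₁ ^ 2 * θ₂ / 2 * Real.exp (-d / θ₂) :=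
  stmt_12_general θ₁ θ₂ h2 g hg a b d hd
end
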